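/- arXiv:2604.20113 — 3 statements merged into one kernel-verified Lean document; each statement's English description precedes it below -/
import Mathlib

section
/- For every n ∈ ℕ and every (A_1, …, A_n) ∈ (𝔽_q^1[X])^n, the fundamental cylinder I(A_1, …, A_n) is a disc in Δ with diameter |I(A_1, …, A_n)| = q^{−2∑_{i=1}^n deg A_i − 1}. -/
open scoped ENNReal
open Filter
open scoped Classical

noncomputable section

namespace LaurentCF

/-! We model the field `𝔽_q((X⁻¹))` of formal Laurent series in `X⁻¹` by
`LaurentSeries Fq = HahnSeries ℤ Fq`, where the Hahn-series variable plays the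
role of `X⁻¹`: the coefficient at `i : ℤ` is the coefficient `c_i` of `X^{-i}`. -/

variable (Fq : Type) [Field Fq] [Fintype Fq]

/-- `deg x = - inf {n : ℤ | c_n ≠ 0}` (with junk value `0` at `x = 0`). -/
def lsDeg (x : LaurentSeries Fq) : ℤ := -(HahnSeries.order x)

/-- The absolute value `‖x‖_q = q ^ (deg x)`, `‖0‖_q = 0`. -/
def qnorm (x : LaurentSeries Fq) : ℝ :=
  if x = 0 then 0 else (Fintype.card Fq : ℝ) ^ (lsDeg Fq x)

variable {Fq}

lemma one_lt_cardR : (1 : ℝ) < (Fintype.card Fq : ℝ) := by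
  exact_mod_cast Fintype.one_lt_card

lemma qnorm_nonneg (x : LaurentSeries Fq) : 0 ≤ qnorm Fq x := by
  unfold qnorm
  split
  · exact le_refl 0
  · exact zpow_nonneg (by positivity) _

lemma qnorm_zero : qnorm Fq (0 : LaurentSeries Fq) = 0 := by simp [qnorm]

lemma qnorm_pos {x : LaurentSeries Fq} (hx : x ≠ 0) : 0 < qnorm Fq x := by
  unfold qnorm
  rw [if_neg hx]
  exact zpow_pos (lt_trans one_pos one_lt_cardR) _

lemma qnorm_neg (x : LaurentSeries Fq) : qnorm Fq (-x) = qnorm Fq x := by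
  unfold qnorm lsDeg
  rw [HahnSeries.order_neg, neg_eq_zero]

lemma qnorm_add_le (x y : LaurentSeries Fq) :
    qnorm Fq (x + y) ≤ max (qnorm Fq x) (qnorm Fq y) := by
  by_cases hxy : x + y = 0
  · rw [hxy, qnorm_zero]
    exact le_max_of_le_left (qnorm_nonneg x)
  by_cases hx : x = 0
  · simp [hx, le_max_of_le_right (le_refl (qnorm Fq y))]
  by_cases hy : y = 0
  · simp [hy, le_max_of_le_left (le_refl (qnorm Fq x))]
  have hmin : min (HahnSeries.order x) (HahnSeries.order y) ≤ HahnSeries.order (x + y) :=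
    HahnSeries.min_order_le_order_add hxy
  have hdeg : lsDeg Fq (x + y) ≤ max (lsDeg Fq x) (lsDeg Fq y) := by
    unfold lsDeg
    rw [min_le_iff] at hmin
    rw [le_max_iff]
    omega
  have h1 : (1 : ℝ) ≤ (Fintype.card Fq : ℝ) := le_of_lt one_lt_cardR
  unfold qnorm
  rw [if_neg hxy, if_neg hx, if_neg hy]
  rcases le_total (lsDeg Fq x) (lsDeg Fq y) with h | h
  · refine le_max_of_le_right ?_
    exact zpow_le_zpow_right₀ h1 (by rw [max_eq_right h] at hdeg; exact hdeg)
  · refine le_max_of_le_left ?_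
    exact zpow_le_zpow_right₀ h1 (by rw [max_eq_left h] at hdeg; exact hdeg)

variable (Fq) in
/-- The open unit disc `Δ = {x : ‖x‖_q < 1}`. -/
structure Delta : Type where
  val : LaurentSeries Fq
  norm_lt : qnorm Fq val < 1

lemma Delta.ext' {x y : Delta Fq} (h : x.val = y.val) : x = y := by
  cases x; cases y; simpa using h

instance : EMetricSpace (Delta Fq) where
  edist x y := ENNReal.ofReal (qnorm Fq (x.val - y.val))
  edist_self x := by simp [qnorm]
  edist_comm x y := by
    show ENNReal.ofReal _ = ENNReal.ofReal _
    rw [show x.val - y.val = -(y.val - x.val) by ring, qnorm_neg]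
  edist_triangle x y z := by
    show ENNReal.ofReal _ ≤ ENNReal.ofReal _ + ENNReal.ofReal _
    have h := qnorm_add_le (x.val - y.val) (y.val - z.val)
    rw [sub_add_sub_cancel] at h
    refine le_trans (ENNReal.ofReal_le_ofReal h) ?_
    rcases max_cases (qnorm Fq (x.val - y.val)) (qnorm Fq (y.val - z.val)) with ⟨heq, _⟩ | ⟨heq, _⟩ <;>
      rw [heq]
    · exact le_self_add
    · exact le_add_self
  eq_of_edist_eq_zero := by
    intro x y h
    have h : ENNReal.ofReal (qnorm Fq (x.val - y.val)) = 0 := h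
    rw [ENNReal.ofReal_eq_zero] at h
    by_contra hne
    have : x.val - y.val ≠ 0 := fun hc => hne (Delta.ext' (sub_eq_zero.mp hc))
    exact absurd h (not_le.mpr (qnorm_pos this))

instance : MeasurableSpace (Delta Fq) := borel _
instance : BorelSpace (Delta Fq) := ⟨rfl⟩

variable (Fq)

/-- The integral part `[x] = ∑_{i ≤ 0} c_i X^{-i}`. -/
def intPart (x : LaurentSeries Fq) : LaurentSeries Fq :=
  ⟨fun i => if i ≤ 0 then x.coeff i else 0, x.isPWO_support'.mono (by
    intro i hi
    simp only [Function.mem_support, ne_eq] at hi ⊢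
    intro h
    apply hi
    split <;> simp [h])⟩

/-- The Gauss-type map `T(x) = 1/x - [1/x]`, `T(0) = 0` (extended by the same
formula outside `Δ`). -/
def Tmap (x : LaurentSeries Fq) : LaurentSeries Fq :=
  if x = 0 then 0 else x⁻¹ - intPart Fq x⁻¹

/-- The natural interpretation of a polynomial `P(X) = ∑ a_i X^i` as a Laurent
series in `X⁻¹` (coefficient `a_i` at index `-i`). -/
def polyToLS (P : Polynomial Fq) : LaurentSeries Fq :=
  ∑ i ∈ P.support, HahnSeries.single (-(i : ℤ)) (P.coeff i)

/-- The inverse correspondence (junk outside the range of `polyToLS`). -/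
def lsToPoly : LaurentSeries Fq → Polynomial Fq := Function.invFun (polyToLS Fq)

/-- The digit `A_{n+1}(x) = [1 / T^n(x)]`, read off as a polynomial in `X`.
So `digit Fq n x` is the `(n+1)`-st continued fraction digit of `x`. -/
def digit (n : ℕ) (x : LaurentSeries Fq) : Polynomial Fq :=
  lsToPoly Fq (intPart Fq ((Tmap Fq)^[n] x)⁻¹)

/-- The set of rational points: the image of `𝔽_q(X)` in `𝔽_q((X⁻¹))`. -/
def ratSet : Set (LaurentSeries Fq) := Set.range ((↑) : RatFunc Fq → LaurentSeries Fq)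

/-- `𝔽_q^1[X]`, the set of polynomials of degree at least one. -/
def poly1 : Set (Polynomial Fq) := {A | 1 ≤ A.natDegree}

/-- The set `E` of points of `Δ ∖ 𝔽_q(X)` with pairwise distinct digits. -/
def Eset : Set (Delta Fq) :=
  {x | x.val ∉ ratSet Fq ∧ ∀ m n : ℕ, m ≠ n → digit Fq m x.val ≠ digit Fq n x.val}

/-- `Q_N(S)`, the elements of `S` of degree at most `N`. -/
def QN (N : ℕ) (S : Set (Polynomial Fq)) : Set (Polynomial Fq) :=
  {A ∈ S | A.natDegree ≤ N}

/-- The relative upper density `d̄_q(U|S)`. -/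
def relDensQ (U S : Set (Polynomial Fq)) : ℝ :=
  Filter.limsup (fun N : ℕ => ((QN Fq N U).ncard : ℝ) / ((QN Fq N S).ncard)) Filter.atTop

/-- `d̄_q(U) := d̄_q(U | 𝔽_q^1[X])`. -/
def densQ (U : Set (Polynomial Fq)) : ℝ := relDensQ Fq U (poly1 Fq)

/-- The relative upper density `d̄(B|G)` for sets of natural numbers. -/
def relDensN (B G : Set ℕ) : ℝ :=
  Filter.limsup (fun N : ℕ => ((B ∩ Set.Icc 1 N).ncard : ℝ) / ((G ∩ Set.Icc 1 N).ncard))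
    Filter.atTop

/-- The upper density `d̄(B) = d̄(B|ℕ)`. -/
def densN (B : Set ℕ) : ℝ :=
  Filter.limsup (fun N : ℕ => ((B ∩ Set.Icc 1 N).ncard : ℝ) / (N : ℝ)) Filter.atTop

/-- `deg S`, the set of degrees of elements of `S`. -/
def degSet (S : Set (Polynomial Fq)) : Set ℕ := Polynomial.natDegree '' S

/-- `S` has growth density with exponent `α`. -/
def HasGrowthDensity (S : Set (Polynomial Fq)) (α : ℝ) : Prop :=
  ∃ γ₁ > (0 : ℝ), ∃ γ₂ > (0 : ℝ), ∃ β ≥ (0 : ℝ), ∀ᶠ N : ℕ in Filter.atTop,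
    γ₁ * (Fintype.card Fq : ℝ) ^ ((N : ℝ) / α) / (N : ℝ) ^ β ≤ ((QN Fq N S).ncard : ℝ) ∧
    ((QN Fq N S).ncard : ℝ) ≤ γ₂ * (Fintype.card Fq : ℝ) ^ ((N : ℝ) / α) / (N : ℝ) ^ β


/-- The fundamental cylinder `I(A_1, …, A_n)` (here `A : Fin n → _`, with `A i`
playing the role of `A_{i+1}`): the set of `x ∈ Δ` whose first `n` digits are
defined and equal to the prescribed ones. -/
def cylinder (n : ℕ) (A : Fin n → Polynomial Fq) : Set (Delta Fq) :=
  {x | ∀ i : Fin n, (Tmap Fq)^[(i : ℕ)] x.val ≠ 0 ∧ digit Fq i x.val = A i}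

/-- The convergence exponent `τ(S) = inf {s ≥ 0 : ∑_{A ∈ S} (q^{-2 deg A})^s < ∞}`. -/
def convExp (S : Set (Polynomial Fq)) : ℝ :=
  sInf {s : ℝ | 0 ≤ s ∧ Summable (fun A : S =>
    ((Fintype.card Fq : ℝ) ^ (-2 * ((A : Polynomial Fq).natDegree : ℤ))) ^ s)}

/-- The set `E` together with the digit restriction and growth condition defining a
seed set: `R_t(K) = {x ∈ E : A_n(x) ∈ K, (2n)^t ≤ deg A_n(x) < (2n+1)^t for all n ≥ 1}`.
(Recall `digit Fq n x` is `A_{n+1}(x)`.) -/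
def seedSet (t : ℕ) (K : Set (Polynomial Fq)) : Set (Delta Fq) :=
  {x | x ∈ Eset Fq ∧ ∀ n : ℕ,
    digit Fq n x.val ∈ K ∧
    (2 * (n + 1)) ^ t ≤ (digit Fq n x.val).natDegree ∧
    (digit Fq n x.val).natDegree < (2 * (n + 1) + 1) ^ t}

/-- The set `𝓘_q` of irreducible polynomials of positive degree. -/
def irreds : Set (Polynomial Fq) := {P ∈ poly1 Fq | Irreducible P}

/-- `f` is Hölder continuous with exponent `γ` on `F`. -/
def HolderOnDelta (F : Set (Delta Fq)) (f : Delta Fq → Delta Fq) (γ : ℝ) : Prop :=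
  ∃ C > (0 : ℝ), ∀ x ∈ F, ∀ y ∈ F,
    qnorm Fq ((f x).val - (f y).val) ≤ C * qnorm Fq (x.val - y.val) ^ γ

/-- `f` is almost Lipschitz on `F`: Hölder continuous with every exponent `γ ∈ (0,1)`. -/
def AlmostLipschitzOn (F : Set (Delta Fq)) (f : Delta Fq → Delta Fq) : Prop :=
  ∀ γ : ℝ, 0 < γ → γ < 1 → HolderOnDelta Fq F f γ

/-- Insertion of the blocks `W_k` (given as lists, sorted by degree) into the digit
sequence `a` (where `a n` is the `(n+1)`-st digit), each block `W_k` being inserted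
immediately after the digit with (1-based) index `M k`. -/
def insertSeq (M : ℕ → ℕ) (W : ℕ → List (Polynomial Fq)) (a : ℕ → Polynomial Fq)
    (n : ℕ) : Polynomial Fq :=
  let c : ℕ → ℕ := fun k => M k + ∑ j ∈ Finset.range k, (W (j + 1)).length
  let k := Nat.findGreatest (fun j => c j ≤ n) n
  if n - c k < M (k + 1) - M k then a (M k + (n - c k))
  else (W (k + 1)).getD (n - c k - (M (k + 1) - M k)) 0

/-- The function `μ : [1,∞) → ℕ`, `μ(x) = k` for `x ∈ [k!, (k+1)!)`. -/
def muFn (x : ℝ) : ℕ := sSup {k : ℕ | (k.factorial : ℝ) ≤ x}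

/-- The set `P = ⋃_{k ≥ 2} {k! + ik : i = 0, …, k! - 1}`. -/
def Pset : Set ℕ :=
  ⋃ k ∈ {k : ℕ | 2 ≤ k}, {m | ∃ i < k.factorial, m = k.factorial + i * k}

/-! The branch `φ_a(y) = 1/(a + y)` of `T⁻¹` satisfies
`I(a, A₂, …, Aₙ) = φ_a(I(A₂, …, Aₙ))`. Since `‖a + y‖_q = q^{deg a}` on `Δ`, the identity
`1/(a+x) − 1/(a+y) = (y − x)/((a+x)(a+y))` shows that `φ_a` multiplies every distance by
`q^{−2 deg a}`; moreover its image contains every disc of radius `q^{−2 deg a − 1}` centred in it.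
So `φ_a` maps the closed disc of radius `q^k` (`k ≤ −1`) about `c` onto the closed disc of radius
`q^{−2 deg a + k}` about `φ_a(c)`. Starting from `Δ`, the closed disc of radius `q⁻¹` about `0`,
induction on `n` makes `I(A₁, …, Aₙ)` a closed disc of radius `q^{−2 ∑ deg Aᵢ − 1}`. Finally, the
metric is ultrametric, so a closed disc has diameter at most its radius `q^k`, and the point
`y + X^k` of `Δ` is at distance exactly `q^k` from the centre `y`. -/

section AnyField

variable {K : Type} [Field K]

lemma intPart_coeff (x : LaurentSeries K) (i : ℤ) :
    (intPart K x).coeff i = if i ≤ 0 then x.coeff i else 0 := rfl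

lemma intPart_add (x y : LaurentSeries K) : intPart K (x + y) = intPart K x + intPart K y := by
  ext i
  simp only [intPart_coeff, HahnSeries.coeff_add]
  split_ifs <;> simp

lemma intPart_eq_zero {x : LaurentSeries K} (hx : ∀ i ≤ 0, x.coeff i = 0) : intPart K x = 0 := by
  ext i
  rw [intPart_coeff]
  split_ifs with hi
  · exact hx i hi
  · rfl

lemma coeff_sub_intPart {x : LaurentSeries K} {i : ℤ} (hi : i ≤ 0) :
    (x - intPart K x).coeff i = 0 := by
  rw [HahnSeries.coeff_sub, intPart_coeff, if_pos hi, sub_self]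

lemma polyToLS_coeff (P : Polynomial K) (k : ℤ) :
    (polyToLS K P).coeff k = if k ≤ 0 then P.coeff (-k).toNat else 0 := by
  simp only [polyToLS, HahnSeries.coeff_sum, HahnSeries.coeff_single]
  split_ifs with hk
  · rw [Finset.sum_eq_single (-k).toNat]
    · exact if_pos (by omega)
    · exact fun i _ hi => if_neg (by omega)
    · intro hP
      rw [Polynomial.notMem_support_iff.mp hP, ite_self]
  · exact Finset.sum_eq_zero fun i _ => if_neg (by omega)

lemma polyToLS_injective : Function.Injective (polyToLS K) := by
  intro P Q h
  ext j
  simpa [polyToLS_coeff] using congrArg (fun z : LaurentSeries K => z.coeff (-(j : ℤ))) h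

lemma lsToPoly_polyToLS (P : Polynomial K) : lsToPoly K (polyToLS K P) = P :=
  Function.leftInverse_invFun polyToLS_injective P

lemma intPart_polyToLS (P : Polynomial K) : intPart K (polyToLS K P) = polyToLS K P := by
  ext i
  rw [intPart_coeff, polyToLS_coeff]
  split_ifs <;> rfl

lemma exists_polyToLS_eq_intPart (x : LaurentSeries K) :
    ∃ P : Polynomial K, polyToLS K P = intPart K x := by
  let N := (-x.order).toNat
  refine ⟨∑ j ∈ Finset.range (N + 1), Polynomial.monomial j (x.coeff (-(j : ℤ))), ?_⟩
  ext k
  simp only [polyToLS_coeff, intPart_coeff, Polynomial.finsetSum_coeff,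
    Polynomial.coeff_monomial, Finset.sum_ite_eq', Finset.mem_range]
  split_ifs with hk hkN <;> try rfl
  · congr; omega
  · exact (HahnSeries.coeff_eq_zero_of_lt_order (by omega)).symm

lemma polyToLS_lsToPoly_intPart (x : LaurentSeries K) :
    polyToLS K (lsToPoly K (intPart K x)) = intPart K x :=
  Function.invFun_eq (exists_polyToLS_eq_intPart x)

lemma polyToLS_ne_zero {P : Polynomial K} (hP : P ≠ 0) : polyToLS K P ≠ 0 :=
  fun h => hP (polyToLS_injective (h.trans (by simp [polyToLS])))

lemma order_polyToLS {P : Polynomial K} (hP : P ≠ 0) :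
    (polyToLS K P).order = -(P.natDegree : ℤ) := by
  have hlead : (polyToLS K P).coeff (-(P.natDegree : ℤ)) ≠ 0 := by
    simpa [polyToLS_coeff] using Polynomial.leadingCoeff_ne_zero.mpr hP
  refine le_antisymm (HahnSeries.order_le_of_coeff_ne_zero hlead) ?_
  rw [HahnSeries.le_order_iff_forall (HahnSeries.ne_zero_of_coeff_ne_zero hlead)]
  intro j hj
  rw [polyToLS_coeff]
  split_ifs
  · exact Polynomial.coeff_eq_zero_of_natDegree_lt (by omega)
  · rfl

lemma Tmap_of_ne_zero {x : LaurentSeries K} (hx : x ≠ 0) : Tmap K x = x⁻¹ - intPart K x⁻¹ :=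
  if_neg hx

lemma digit_zero (x : LaurentSeries K) : digit K 0 x = lsToPoly K (intPart K x⁻¹) := rfl

lemma digit_succ (k : ℕ) (x : LaurentSeries K) : digit K (k + 1) x = digit K k (Tmap K x) := by
  rw [digit, digit, Function.iterate_succ_apply]

end AnyField

variable {Fq}

lemma cardR_pos : (0 : ℝ) < Fintype.card Fq := zero_lt_one.trans one_lt_cardR

lemma qnorm_of_ne_zero {x : LaurentSeries Fq} (hx : x ≠ 0) :
    qnorm Fq x = (Fintype.card Fq : ℝ) ^ (-x.order) :=
  if_neg hx

lemma qnorm_one : qnorm Fq (1 : LaurentSeries Fq) = 1 := by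
  rw [qnorm_of_ne_zero one_ne_zero, HahnSeries.order_one, neg_zero, zpow_zero]

lemma qnorm_mul (x y : LaurentSeries Fq) : qnorm Fq (x * y) = qnorm Fq x * qnorm Fq y := by
  rcases eq_or_ne x 0 with rfl | hx
  · simp [qnorm_zero]
  rcases eq_or_ne y 0 with rfl | hy
  · simp [qnorm_zero]
  rw [qnorm_of_ne_zero hx, qnorm_of_ne_zero hy, qnorm_of_ne_zero (mul_ne_zero hx hy),
    HahnSeries.order_mul hx hy, neg_add, zpow_add₀ cardR_pos.ne']

lemma qnorm_inv (x : LaurentSeries Fq) : qnorm Fq x⁻¹ = (qnorm Fq x)⁻¹ := by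
  rcases eq_or_ne x 0 with rfl | hx
  · simp [qnorm_zero]
  have h := qnorm_mul x x⁻¹
  rw [mul_inv_cancel₀ hx, qnorm_one] at h
  exact eq_inv_of_mul_eq_one_right h.symm

lemma qnorm_inv_sub_inv {u v : LaurentSeries Fq} (hu : u ≠ 0) (hv : v ≠ 0) :
    qnorm Fq (u⁻¹ - v⁻¹) = qnorm Fq (u - v) / (qnorm Fq u * qnorm Fq v) := by
  rw [inv_sub_inv hu hv, div_eq_mul_inv, qnorm_mul, qnorm_inv, qnorm_mul, ← div_eq_mul_inv,
    ← neg_sub, qnorm_neg]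

lemma qnorm_add_eq_left {x y : LaurentSeries Fq} (h : qnorm Fq y < qnorm Fq x) :
    qnorm Fq (x + y) = qnorm Fq x := by
  refine le_antisymm ((qnorm_add_le x y).trans (max_eq_left h.le).le) ?_
  have h' := qnorm_add_le (x + y) (-y)
  rw [add_neg_cancel_right, qnorm_neg] at h'
  rcases max_cases (qnorm Fq (x + y)) (qnorm Fq y) with ⟨he, _⟩ | ⟨he, _⟩ <;> rw [he] at h'
  · exact h'
  · exact absurd h' (not_le.mpr h)

lemma qnorm_lt_one_iff {x : LaurentSeries Fq} : qnorm Fq x < 1 ↔ ∀ i ≤ 0, x.coeff i = 0 := by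
  rcases eq_or_ne x 0 with rfl | hx
  · simp [qnorm_zero]
  rw [qnorm_of_ne_zero hx, zpow_lt_one_iff_right₀ one_lt_cardR, neg_lt_zero,
    show 0 < x.order ↔ 1 ≤ x.order by omega, HahnSeries.le_order_iff_forall hx]
  exact ⟨fun h i hi => h i (by omega), fun h j hj => h j (by omega)⟩

lemma qnorm_le_of_lt_one {x : LaurentSeries Fq} (h : qnorm Fq x < 1) :
    qnorm Fq x ≤ (Fintype.card Fq : ℝ) ^ (-1 : ℤ) := by
  rcases eq_or_ne x 0 with rfl | hx
  · rw [qnorm_zero]; positivity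
  rw [qnorm_of_ne_zero hx] at h ⊢
  rw [zpow_lt_one_iff_right₀ one_lt_cardR] at h
  exact zpow_le_zpow_right₀ one_lt_cardR.le (by omega)

lemma qnorm_single (k : ℤ) :
    qnorm Fq (HahnSeries.single k (1 : Fq)) = (Fintype.card Fq : ℝ) ^ (-k) := by
  rw [qnorm_of_ne_zero (HahnSeries.single_ne_zero one_ne_zero), HahnSeries.order_single one_ne_zero]

lemma qnorm_polyToLS {P : Polynomial Fq} (hP : P ≠ 0) :
    qnorm Fq (polyToLS Fq P) = (Fintype.card Fq : ℝ) ^ (P.natDegree : ℤ) := by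
  rw [qnorm_of_ne_zero (polyToLS_ne_zero hP), order_polyToLS hP, neg_neg]

lemma _root_.ENNReal.ofReal_natCast_zpow {m : ℕ} (hm : m ≠ 0) (k : ℤ) :
    ENNReal.ofReal ((m : ℝ) ^ k) = (m : ℝ≥0∞) ^ k := by
  cases k with
  | ofNat k =>
    rw [Int.ofNat_eq_natCast, zpow_natCast, zpow_natCast, ENNReal.ofReal_pow (Nat.cast_nonneg _),
      ENNReal.ofReal_natCast]
  | negSucc k =>
    rw [zpow_negSucc, zpow_negSucc,
      ENNReal.ofReal_inv_of_pos (pow_pos (Nat.cast_pos.mpr (Nat.pos_of_ne_zero hm)) _),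
      ENNReal.ofReal_pow (Nat.cast_nonneg _), ENNReal.ofReal_natCast]

namespace Delta

lemma edist_def (x y : Delta Fq) : edist x y = ENNReal.ofReal (qnorm Fq (x.val - y.val)) := rfl

lemma edist_le_zpow_iff {x y : Delta Fq} {k : ℤ} :
    edist x y ≤ (Fintype.card Fq : ℝ≥0∞) ^ k ↔
      qnorm Fq (x.val - y.val) ≤ (Fintype.card Fq : ℝ) ^ k := by
  rw [edist_def, ← ENNReal.ofReal_natCast_zpow Fintype.card_ne_zero,
    ENNReal.ofReal_le_ofReal_iff (zpow_nonneg cardR_pos.le _)]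

lemma edist_le_max (x y z : Delta Fq) : edist x z ≤ max (edist x y) (edist y z) := by
  rw [edist_def, edist_def, edist_def, ← ENNReal.ofReal_max, ← sub_add_sub_cancel _ y.val]
  exact ENNReal.ofReal_le_ofReal (qnorm_add_le _ _)

instance : Zero (Delta Fq) := ⟨⟨0, by rw [qnorm_zero]; exact one_pos⟩⟩

lemma closedEBall_zero_eq_univ :
    Metric.closedEBall (0 : Delta Fq) ((Fintype.card Fq : ℝ≥0∞) ^ (-1 : ℤ)) = Set.univ :=
  Set.eq_univ_of_forall fun x =>
    edist_le_zpow_iff.mpr ((sub_zero x.val).symm ▸ qnorm_le_of_lt_one x.norm_lt)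

lemma exists_edist_eq_zpow (y : Delta Fq) {k : ℤ} (hk : k ≤ -1) :
    ∃ z : Delta Fq, edist z y = (Fintype.card Fq : ℝ≥0∞) ^ k := by
  have hs : qnorm Fq (HahnSeries.single (-k) (1 : Fq)) < 1 := by
    rw [qnorm_single, neg_neg]
    exact zpow_lt_one_of_neg₀ one_lt_cardR (by omega)
  refine ⟨⟨y.val + HahnSeries.single (-k) 1,
    (qnorm_add_le _ _).trans_lt (max_lt y.norm_lt hs)⟩, ?_⟩
  rw [edist_def, add_sub_cancel_left, qnorm_single, neg_neg,
    ENNReal.ofReal_natCast_zpow Fintype.card_ne_zero]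

lemma ediam_closedEBall_zpow (y : Delta Fq) {k : ℤ} (hk : k ≤ -1) :
    Metric.ediam (Metric.closedEBall y ((Fintype.card Fq : ℝ≥0∞) ^ k)) =
      (Fintype.card Fq : ℝ≥0∞) ^ k := by
  refine le_antisymm (Metric.ediam_le fun a ha b hb => ?_) ?_
  · rw [Metric.mem_closedEBall] at ha hb
    exact (edist_le_max a y b).trans (max_le ha (edist_comm y b ▸ hb))
  · obtain ⟨z, hz⟩ := exists_edist_eq_zpow y hk
    calc (Fintype.card Fq : ℝ≥0∞) ^ k = edist z y := hz.symm
      _ ≤ _ := Metric.edist_le_ediam_of_mem (Metric.mem_closedEBall.mpr hz.le)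
        Metric.mem_closedEBall_self

end Delta

theorem _root_.Metric.image_closedEBall_of_edist_eq_mul {α β : Type*} [PseudoEMetricSpace α]
    [PseudoEMetricSpace β] {f : α → β} {s : ℝ≥0∞} (hs₀ : s ≠ 0) (hs : s ≠ ⊤)
    (hf : ∀ x y, edist (f x) (f y) = s * edist x y) {c : α} {r : ℝ≥0∞}
    (hr : Metric.closedEBall (f c) (s * r) ⊆ Set.range f) :
    f '' Metric.closedEBall c r = Metric.closedEBall (f c) (s * r) := by
  ext z
  constructor
  · rintro ⟨w, hw, rfl⟩
    rw [Metric.mem_closedEBall, hf]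
    exact mul_le_mul_right hw s
  · intro hz
    obtain ⟨w, rfl⟩ := hr hz
    rw [Metric.mem_closedEBall, hf, ENNReal.mul_le_mul_iff_right hs₀ hs] at hz
    exact ⟨w, hz, rfl⟩

lemma qnorm_Tmap_lt_one (x : LaurentSeries Fq) : qnorm Fq (Tmap Fq x) < 1 := by
  rcases eq_or_ne x 0 with rfl | hx
  · rw [Tmap, if_pos rfl, qnorm_zero]; exact one_pos
  · rw [Tmap_of_ne_zero hx, qnorm_lt_one_iff]
    exact fun i hi => coeff_sub_intPart hi

def Tdelta (x : Delta Fq) : Delta Fq := ⟨Tmap Fq x.val, qnorm_Tmap_lt_one _⟩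

lemma qnorm_polyToLS_add {a : Polynomial Fq} (ha : a ∈ poly1 Fq) {y : LaurentSeries Fq}
    (hy : qnorm Fq y < 1) :
    qnorm Fq (polyToLS Fq a + y) = (Fintype.card Fq : ℝ) ^ (a.natDegree : ℤ) := by
  have ha₀ : a ≠ 0 := Polynomial.ne_zero_of_natDegree_gt ha
  have hP := qnorm_polyToLS (Fq := Fq) ha₀
  refine (qnorm_add_eq_left ?_).trans hP
  rw [hP]
  exact hy.trans_le (one_le_zpow₀ one_lt_cardR.le (Int.natCast_nonneg _))

lemma polyToLS_add_ne_zero {a : Polynomial Fq} (ha : a ∈ poly1 Fq) {y : LaurentSeries Fq}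
    (hy : qnorm Fq y < 1) : polyToLS Fq a + y ≠ 0 := by
  intro h
  have := qnorm_polyToLS_add ha hy
  rw [h, qnorm_zero] at this
  exact (zpow_pos cardR_pos _).ne this

/-- The inverse branch `y ↦ 1 / (a + y)` of `T` selecting the digit `a`. -/
def phiMap (a : Polynomial Fq) (ha : a ∈ poly1 Fq) (y : Delta Fq) : Delta Fq :=
  ⟨(polyToLS Fq a + y.val)⁻¹, by
    rw [qnorm_inv, qnorm_polyToLS_add ha y.norm_lt, ← zpow_neg]
    exact zpow_lt_one_of_neg₀ one_lt_cardR (by have : 1 ≤ a.natDegree := ha; omega)⟩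

section phiMap

variable {a : Polynomial Fq} (ha : a ∈ poly1 Fq)

lemma qnorm_phiMap (y : Delta Fq) :
    qnorm Fq (phiMap a ha y).val = (Fintype.card Fq : ℝ) ^ (-(a.natDegree : ℤ)) := by
  rw [phiMap, qnorm_inv, qnorm_polyToLS_add ha y.norm_lt, zpow_neg]

lemma edist_phiMap (x y : Delta Fq) :
    edist (phiMap a ha x) (phiMap a ha y) =
      (Fintype.card Fq : ℝ≥0∞) ^ (-2 * (a.natDegree : ℤ)) * edist x y := by
  have hq := cardR_pos (Fq := Fq)
  rw [Delta.edist_def, Delta.edist_def, phiMap, phiMap,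
    qnorm_inv_sub_inv (polyToLS_add_ne_zero ha x.norm_lt) (polyToLS_add_ne_zero ha y.norm_lt),
    add_sub_add_left_eq_sub, qnorm_polyToLS_add ha x.norm_lt, qnorm_polyToLS_add ha y.norm_lt,
    div_eq_mul_inv, mul_comm, ← zpow_add₀ hq.ne', ← zpow_neg,
    ENNReal.ofReal_mul (zpow_nonneg hq.le _), ENNReal.ofReal_natCast_zpow Fintype.card_ne_zero]
  congr 2
  ring

lemma closedEBall_subset_range_phiMap (c : Delta Fq) :
    Metric.closedEBall (phiMap a ha c) ((Fintype.card Fq : ℝ≥0∞) ^ (-2 * (a.natDegree : ℤ) - 1))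
      ⊆ Set.range (phiMap a ha) := by
  intro z hz
  have hd : 1 ≤ (a.natDegree : ℤ) := by exact_mod_cast (ha : 1 ≤ a.natDegree)
  have hq := cardR_pos (Fq := Fq)
  set v := polyToLS Fq a + c.val
  have hv : v ≠ 0 := polyToLS_add_ne_zero ha c.norm_lt
  have hvinv : qnorm Fq v⁻¹ = (Fintype.card Fq : ℝ) ^ (-(a.natDegree : ℤ)) := qnorm_phiMap ha c
  have hzv : qnorm Fq (z.val - v⁻¹) ≤ (Fintype.card Fq : ℝ) ^ (-2 * (a.natDegree : ℤ) - 1) :=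
    Delta.edist_le_zpow_iff.mp hz
  have hzv_lt : qnorm Fq (z.val - v⁻¹) < qnorm Fq v⁻¹ :=
    hzv.trans_lt (hvinv ▸ zpow_lt_zpow_right₀ one_lt_cardR (by omega))
  have hz_norm : qnorm Fq z.val = qnorm Fq v⁻¹ := by
    rw [← qnorm_add_eq_left hzv_lt, add_sub_cancel]
  have hz₀ : z.val ≠ 0 := fun h =>
    (qnorm_pos (inv_ne_zero hv)).ne' (by rw [← hz_norm, h, qnorm_zero])
  -- the preimage is `w = 1/z - a`; it lies within `q⁻¹` of `c ∈ Δ`, hence in `Δ`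
  have hwc : qnorm Fq (z.val⁻¹ - v⁻¹⁻¹) < 1 := by
    rw [qnorm_inv_sub_inv hz₀ (inv_ne_zero hv), hz_norm, hvinv,
      ← zpow_add₀ hq.ne', div_lt_one (zpow_pos hq _)]
    exact hzv.trans_lt (zpow_lt_zpow_right₀ one_lt_cardR (by omega))
  have hw : qnorm Fq (z.val⁻¹ - polyToLS Fq a) < 1 := by
    rw [inv_inv, sub_add_eq_sub_sub] at hwc
    rw [← add_sub_cancel c.val (z.val⁻¹ - polyToLS Fq a)]
    exact (qnorm_add_le _ _).trans_lt (max_lt c.norm_lt hwc)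
  refine ⟨⟨z.val⁻¹ - polyToLS Fq a, hw⟩, Delta.ext' ?_⟩
  change (polyToLS Fq a + (z.val⁻¹ - polyToLS Fq a))⁻¹ = z.val
  rw [add_sub_cancel, inv_inv]

lemma phiMap_image_closedEBall (c : Delta Fq) {k : ℤ} (hk : k ≤ -1) :
    phiMap a ha '' Metric.closedEBall c ((Fintype.card Fq : ℝ≥0∞) ^ k) =
      Metric.closedEBall (phiMap a ha c)
        ((Fintype.card Fq : ℝ≥0∞) ^ (-2 * (a.natDegree : ℤ) + k)) := by
  have hq₀ : (Fintype.card Fq : ℝ≥0∞) ≠ 0 := by simp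
  have hq : (Fintype.card Fq : ℝ≥0∞) ≠ ⊤ := ENNReal.natCast_ne_top _
  rw [ENNReal.zpow_add hq₀ hq]
  refine Metric.image_closedEBall_of_edist_eq_mul (ENNReal.zpow_pos hq₀ hq _).ne'
    (ENNReal.zpow_ne_top hq₀ hq _) (edist_phiMap ha) ?_
  rw [← ENNReal.zpow_add hq₀ hq]
  exact (Metric.closedEBall_subset_closedEBall (ENNReal.zpow_le_of_le
    (by exact_mod_cast Fintype.one_lt_card.le) (by omega))).trans
    (closedEBall_subset_range_phiMap ha c)

lemma phiMap_ne_zero (y : Delta Fq) : (phiMap a ha y).val ≠ 0 :=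
  inv_ne_zero (polyToLS_add_ne_zero ha y.norm_lt)

lemma intPart_inv_phiMap (y : Delta Fq) :
    intPart Fq (phiMap a ha y).val⁻¹ = polyToLS Fq a := by
  rw [phiMap, inv_inv, intPart_add, intPart_polyToLS,
    intPart_eq_zero (qnorm_lt_one_iff.mp y.norm_lt), add_zero]

lemma Tdelta_phiMap (y : Delta Fq) : Tdelta (phiMap a ha y) = y := by
  refine Delta.ext' ?_
  change Tmap Fq (phiMap a ha y).val = y.val
  rw [Tmap_of_ne_zero (phiMap_ne_zero ha y), intPart_inv_phiMap, phiMap, inv_inv,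
    add_sub_cancel_left]

lemma digit_zero_phiMap (y : Delta Fq) : digit Fq 0 (phiMap a ha y).val = a := by
  rw [digit_zero, intPart_inv_phiMap, lsToPoly_polyToLS]

end phiMap

lemma phiMap_Tdelta {x : Delta Fq} (hx : x.val ≠ 0) {a : Polynomial Fq} (ha : a ∈ poly1 Fq)
    (hdigit : digit Fq 0 x.val = a) : phiMap a ha (Tdelta x) = x := by
  have hint : intPart Fq x.val⁻¹ = polyToLS Fq a := by
    rw [← hdigit, digit_zero, polyToLS_lsToPoly_intPart]
  refine Delta.ext' ?_
  change (polyToLS Fq a + Tmap Fq x.val)⁻¹ = x.val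
  rw [Tmap_of_ne_zero hx, hint, add_sub_cancel, inv_inv]

lemma cylinder_zero (A : Fin 0 → Polynomial Fq) : cylinder Fq 0 A = Set.univ := by
  simp [cylinder]

lemma mem_cylinder_succ_iff {n : ℕ} {A : Fin (n + 1) → Polynomial Fq} {x : Delta Fq} :
    x ∈ cylinder Fq (n + 1) A ↔
      (x.val ≠ 0 ∧ digit Fq 0 x.val = A 0) ∧ Tdelta x ∈ cylinder Fq n (A ∘ Fin.succ) := by
  simp only [cylinder, Fin.forall_fin_succ, Fin.val_zero, Fin.val_succ,
    Function.iterate_zero, id, Function.iterate_succ_apply, digit_succ, Function.comp_apply]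
  rfl

lemma cylinder_succ {n : ℕ} (A : Fin (n + 1) → Polynomial Fq) (hA : A 0 ∈ poly1 Fq) :
    cylinder Fq (n + 1) A = phiMap (A 0) hA '' cylinder Fq n (A ∘ Fin.succ) := by
  ext x
  rw [mem_cylinder_succ_iff]
  constructor
  · rintro ⟨⟨hx, hdigit⟩, hT⟩
    exact ⟨Tdelta x, hT, phiMap_Tdelta hx hA hdigit⟩
  · rintro ⟨y, hy, rfl⟩
    exact ⟨⟨phiMap_ne_zero hA y, digit_zero_phiMap hA y⟩, (Tdelta_phiMap hA y).symm ▸ hy⟩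

lemma cylinder_eq_closedEBall {n : ℕ} (A : Fin n → Polynomial Fq) (hA : ∀ i, A i ∈ poly1 Fq) :
    ∃ y : Delta Fq, cylinder Fq n A = Metric.closedEBall y
      ((Fintype.card Fq : ℝ≥0∞) ^ (-2 * (∑ i, ((A i).natDegree : ℤ)) - 1)) := by
  induction n with
  | zero => exact ⟨0, by simp [cylinder_zero, Delta.closedEBall_zero_eq_univ]⟩
  | succ n ih =>
    obtain ⟨y, hy⟩ := ih (A ∘ Fin.succ) fun i => hA i.succ
    have hsum : 0 ≤ ∑ i, (((A ∘ Fin.succ) i).natDegree : ℤ) :=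
      Finset.sum_nonneg fun i _ => Int.natCast_nonneg _
    refine ⟨phiMap (A 0) (hA 0) y, ?_⟩
    rw [cylinder_succ A (hA 0), hy, phiMap_image_closedEBall (hA 0) y (by omega),
      Fin.sum_univ_succ]
    congr 2
    simp only [Function.comp_apply]
    ring

theorem cylinder_is_disc_general (Fq : Type) [Field Fq] [Fintype Fq]
    (n : ℕ) (A : Fin n → Polynomial Fq) (hA : ∀ i, A i ∈ poly1 Fq) :
    (∃ (y : Delta Fq) (r : ℝ≥0∞), cylinder Fq n A = EMetric.closedBall y r) ∧
    EMetric.diam (cylinder Fq n A)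
      = (Fintype.card Fq : ℝ≥0∞) ^ (-2 * (∑ i : Fin n, ((A i).natDegree : ℤ)) - 1) := by
  obtain ⟨y, hy⟩ := cylinder_eq_closedEBall A hA
  have hsum : 0 ≤ ∑ i, ((A i).natDegree : ℤ) := Finset.sum_nonneg fun i _ => Int.natCast_nonneg _
  exact ⟨⟨y, _, hy⟩, hy ▸ Delta.ediam_closedEBall_zpow y (by omega)⟩

/-- Every fundamental cylinder is a disc of diameter `q^{-2 ∑ deg A_i - 1}`. -/
theorem cylinder_is_disc (Fq : Type) [Field Fq] [Fintype Fq]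
    (n : ℕ) (hn : 1 ≤ n) (A : Fin n → Polynomial Fq) (hA : ∀ i, A i ∈ poly1 Fq) :
    (∃ (y : Delta Fq) (r : ℝ≥0∞), cylinder Fq n A = EMetric.closedBall y r) ∧
    EMetric.diam (cylinder Fq n A)
      = (Fintype.card Fq : ℝ≥0∞) ^ (-2 * (∑ i : Fin n, ((A i).natDegree : ℤ)) - 1) :=
  cylinder_is_disc_general Fq n A hA

end LaurentCF
end
end

section
/- Let S be an infinite subset of 𝔽_q^1[X], enumerated without repetition as S = {A_n : n ∈ ℕ} with deg A_1 ≤ deg A_2 ≤ ⋯. Then there exists a subset S_* of S such that for all sufficiently large integers T ≥ 1, 1/(2μ(T)) ≤ #{1 ≤ n ≤ T : A_n ∈ S_*}/T ≤ 3/μ(T), and moreover d̄_q(S_*|S) = 0. -/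
open scoped ENNReal
open Filter
open scoped Classical

noncomputable section

namespace LaurentCF

/-! We model the field `𝔽_q((X⁻¹))` of formal Laurent series in `X⁻¹` by
`LaurentSeries Fq = HahnSeries ℤ Fq`, where the Hahn-series variable plays the
role of `X⁻¹`: the coefficient at `i : ℤ` is the coefficient `c_i` of `X^{-i}`. -/

variable (Fq : Type) [Field Fq] [Fintype Fq]

variable {Fq}

variable (Fq)

/-! ### Auxiliary lemmas for `exists_sparse_subset` -/

lemma mem_Pset {x : ℕ} :
    x ∈ Pset ↔ ∃ k, 2 ≤ k ∧ ∃ i < k.factorial, x = k.factorial + i * k := by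
  simp [Pset]

lemma pfin (T : ℕ) : (Pset ∩ Set.Iio T).Finite :=
  (Set.finite_Iio T).subset Set.inter_subset_right

lemma sum_fact_le (m : ℕ) : ∑ k ∈ Finset.range (m + 1), k.factorial ≤ 2 * m.factorial := by
  induction m with
  | zero => simp
  | succ n ih =>
    rw [Finset.sum_range_succ]
    rcases Nat.eq_zero_or_pos n with h | h
    · subst h; decide
    · have h2 : 2 * n.factorial ≤ (n + 1).factorial := by
        rw [Nat.factorial_succ]
        exact Nat.mul_le_mul_right _ (by omega)
      omega

lemma count_lb {K T : ℕ} (hK : 3 ≤ K) (h1 : K.factorial ≤ T) (h2 : T < (K + 1).factorial) :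
    T ≤ 2 * K * (Pset ∩ Set.Iio T).ncard := by
  rcases le_or_gt T (2 * K.factorial) with hsmall | hbig
  · -- use the full block for k = K - 1
    set k := K - 1 with hkdef
    have hk2 : 2 ≤ k := by omega
    have hKk : K = k + 1 := by omega
    have hinj : Function.Injective (fun i : ℕ => k.factorial + i * k) := by
      intro a b hab
      simp only at hab
      have : a * k = b * k := by omega
      exact Nat.eq_of_mul_eq_mul_right (by omega) this
    have hsub : ↑((Finset.range k.factorial).image (fun i => k.factorial + i * k)) ⊆
        Pset ∩ Set.Iio T := by
      intro x hx
      simp only [Finset.coe_image, Finset.coe_range, Set.mem_image, Set.mem_Iio] at hx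
      obtain ⟨i, hi, rfl⟩ := hx
      refine ⟨mem_Pset.mpr ⟨k, hk2, i, hi, rfl⟩, ?_⟩
      have hfp : 1 ≤ k.factorial := k.factorial_pos
      have hkk : k ≤ k.factorial * k := Nat.le_mul_of_pos_left k hfp
      have hle : i * k ≤ (k.factorial - 1) * k := Nat.mul_le_mul_right _ (by omega)
      have hKfact : K.factorial = k.factorial * (k + 1) := by
        rw [hKk, Nat.factorial_succ]; ring
      have hmulexp : (k.factorial - 1) * k + k = k.factorial * k := by
        rw [Nat.sub_mul, one_mul]; exact Nat.sub_add_cancel hkk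
      have hsplit : k.factorial * (k + 1) = k.factorial * k + k.factorial := by ring
      show k.factorial + i * k < T
      omega
    have hcard : ((Finset.range k.factorial).image (fun i => k.factorial + i * k)).card =
        k.factorial := by
      rw [Finset.card_image_of_injective _ hinj, Finset.card_range]
    have hcount : k.factorial ≤ (Pset ∩ Set.Iio T).ncard := by
      have := Set.ncard_le_ncard hsub (pfin T)
      rwa [Set.ncard_coe_finset, hcard] at this
    have hKfact : K.factorial = K * k.factorial := by
      rw [hKk]; rw [Nat.factorial_succ]
    calc T ≤ 2 * K.factorial := hsmall
      _ = 2 * K * k.factorial := by rw [hKfact]; ring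
      _ ≤ 2 * K * (Pset ∩ Set.Iio T).ncard := Nat.mul_le_mul_left _ hcount
  · -- partial block for k = K
    obtain ⟨D, hDeq⟩ : ∃ D, T - K.factorial = D := ⟨_, rfl⟩
    have hDdef : K.factorial + D = T := by omega
    have hDge : K.factorial ≤ D := by omega
    have hDpos : 1 ≤ D := le_trans K.factorial_pos hDge
    obtain ⟨q, hqeq⟩ : ∃ q, (D + K - 1) / K = q := ⟨_, rfl⟩
    have hqK : K * q + (D + K - 1) % K = D + K - 1 := by
      rw [← hqeq]; exact Nat.div_add_mod _ _
    have hmod : (D + K - 1) % K < K := Nat.mod_lt _ (by omega)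
    obtain ⟨m, hmeq⟩ : ∃ m, min K.factorial q = m := ⟨_, rfl⟩
    have hmle1 : m ≤ K.factorial := hmeq ▸ min_le_left _ _
    have hmle2 : m ≤ q := hmeq ▸ min_le_right _ _
    have hinj : Function.Injective (fun i : ℕ => K.factorial + i * K) := by
      intro a b hab
      simp only at hab
      have : a * K = b * K := by omega
      exact Nat.eq_of_mul_eq_mul_right (by omega) this
    have hsub : ↑((Finset.range m).image (fun i => K.factorial + i * K)) ⊆
        Pset ∩ Set.Iio T := by
      intro x hx
      simp only [Finset.coe_image, Finset.coe_range, Set.mem_image, Set.mem_Iio] at hx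
      obtain ⟨i, hi, rfl⟩ := hx
      have hiK : i < K.factorial := by omega
      refine ⟨mem_Pset.mpr ⟨K, by omega, i, hiK, rfl⟩, ?_⟩
      have hi2 : i + 1 ≤ q := by omega
      have hle : (i + 1) * K ≤ q * K := Nat.mul_le_mul_right _ hi2
      have hexp1 : (i + 1) * K = i * K + K := by ring
      have hexp2 : q * K = K * q := mul_comm _ _
      show K.factorial + i * K < T
      omega
    have hcard : ((Finset.range m).image (fun i => K.factorial + i * K)).card = m := by
      rw [Finset.card_image_of_injective _ hinj, Finset.card_range]
    have hcount : m ≤ (Pset ∩ Set.Iio T).ncard := by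
      have := Set.ncard_le_ncard hsub (pfin T)
      rwa [Set.ncard_coe_finset, hcard] at this
    have hmain : T ≤ 2 * K * m := by
      rcases le_total K.factorial q with h | h
      · have hm : m = K.factorial := by rw [← hmeq, min_eq_left h]
        have hfs : (K + 1).factorial = (K + 1) * K.factorial := Nat.factorial_succ K
        have hmul : (K + 1) * K.factorial ≤ 2 * K * K.factorial :=
          Nat.mul_le_mul_right _ (by omega)
        have h2 : 2 * K * m = 2 * K * K.factorial := by rw [hm]
        omega
      · have hm : m = q := by rw [← hmeq, min_eq_right h]
        have h2Km : 2 * K * m = 2 * (K * q) := by rw [hm]; ring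
        omega
    exact hmain.trans (Nat.mul_le_mul_left _ hcount)

lemma count_ub {K T : ℕ} (hK : 2 ≤ K) (h1 : K.factorial ≤ T) (h2 : T < (K + 1).factorial) :
    K * (Pset ∩ Set.Iio T).ncard ≤ 3 * T := by
  set u := (T - K.factorial) / K + 1 with hudef
  set F := ((Finset.range K).biUnion fun k =>
      (Finset.range k.factorial).image (fun i => k.factorial + i * k)) ∪
      (Finset.range u).image (fun i => K.factorial + i * K) with hFdef
  have hsub : Pset ∩ Set.Iio T ⊆ ↑F := by
    rintro x ⟨hxP, hxT⟩
    obtain ⟨k, hk2, i, hik, rfl⟩ := mem_Pset.mp hxP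
    have hxT' : k.factorial + i * k < T := hxT
    have hkK : k ≤ K := by
      by_contra h
      have h3 : (K + 1).factorial ≤ k.factorial := Nat.factorial_le (by omega)
      omega
    simp only [hFdef, Finset.coe_union, Set.mem_union, Finset.mem_coe, Finset.mem_union,
      Finset.mem_biUnion, Finset.mem_range, Finset.mem_image]
    rcases lt_or_eq_of_le hkK with h | h
    · exact Or.inl ⟨k, h, i, hik, rfl⟩
    · subst h
      refine Or.inr ⟨i, ?_, rfl⟩
      have hiK : i * k ≤ T - k.factorial := by omega
      have : i ≤ (T - k.factorial) / k := (Nat.le_div_iff_mul_le (by omega : 0 < k)).mpr hiK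
      omega
  have hcard : F.card ≤ 2 * (K - 1).factorial + u := by
    have hb : ((Finset.range K).biUnion fun k =>
        (Finset.range k.factorial).image (fun i => k.factorial + i * k)).card ≤
        ∑ k ∈ Finset.range K, k.factorial := by
      refine le_trans (Finset.card_biUnion_le) ?_
      exact Finset.sum_le_sum fun k _ =>
        le_trans (Finset.card_image_le) (le_of_eq (Finset.card_range _))
    have hs : ∑ k ∈ Finset.range K, k.factorial ≤ 2 * (K - 1).factorial := by
      have := sum_fact_le (K - 1)
      rwa [show K - 1 + 1 = K by omega] at this
    have hu : ((Finset.range u).image (fun i => K.factorial + i * K)).card ≤ u :=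
      le_trans (Finset.card_image_le) (le_of_eq (Finset.card_range _))
    calc F.card ≤ _ + _ := Finset.card_union_le _ _
      _ ≤ 2 * (K - 1).factorial + u := by omega
  have hcount : (Pset ∩ Set.Iio T).ncard ≤ 2 * (K - 1).factorial + u := by
    have := Set.ncard_le_ncard hsub F.finite_toSet
    rw [Set.ncard_coe_finset] at this
    omega
  have hKfact : K * (K - 1).factorial = K.factorial := by
    conv_rhs => rw [show K = (K - 1) + 1 by omega, Nat.factorial_succ]
    congr 1; omega
  have hq : K * ((T - K.factorial) / K) ≤ T - K.factorial := by
    rw [mul_comm]; exact Nat.div_mul_le_self _ _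
  have hKT : K ≤ T := le_trans (Nat.self_le_factorial K) h1
  have hexp : K * (2 * (K - 1).factorial + u) =
      2 * (K * (K - 1).factorial) + K * ((T - K.factorial) / K) + K := by
    rw [hudef]; ring
  calc K * (Pset ∩ Set.Iio T).ncard ≤ K * (2 * (K - 1).factorial + u) :=
        Nat.mul_le_mul_left _ hcount
    _ = 2 * (K * (K - 1).factorial) + K * ((T - K.factorial) / K) + K := hexp
    _ ≤ 3 * T := by rw [hKfact]; omega

lemma muFn_nat_eq_sSup (T : ℕ) : muFn (T : ℝ) = sSup {k : ℕ | k.factorial ≤ T} := by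
  unfold muFn
  congr 1
  ext k
  exact_mod_cast Iff.rfl

lemma muFn_bdd (T : ℕ) : BddAbove {k : ℕ | k.factorial ≤ T} :=
  ⟨T, fun k hk => le_trans (Nat.self_le_factorial k) hk⟩

lemma muFn_nat_ge {T m : ℕ} (h : m.factorial ≤ T) : m ≤ muFn (T : ℝ) := by
  rw [muFn_nat_eq_sSup]
  exact le_csSup (muFn_bdd T) h

lemma muFn_nat_spec {T : ℕ} (hT : 1 ≤ T) :
    (muFn (T : ℝ)).factorial ≤ T ∧ T < ((muFn (T : ℝ)) + 1).factorial := by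
  rw [muFn_nat_eq_sSup]
  have hne : {k : ℕ | k.factorial ≤ T}.Nonempty := ⟨0, by simpa using hT⟩
  have hmem := Nat.sSup_mem hne (muFn_bdd T)
  refine ⟨hmem, ?_⟩
  by_contra h
  push_neg at h
  have : sSup {k : ℕ | k.factorial ≤ T} + 1 ≤ sSup {k : ℕ | k.factorial ≤ T} :=
    le_csSup (muFn_bdd T) h
  omega

lemma muFn_tendsto : Filter.Tendsto (fun T : ℕ => muFn (T : ℝ)) Filter.atTop Filter.atTop :=
  Filter.tendsto_atTop.mpr fun m =>
    (Filter.eventually_ge_atTop m.factorial).mono fun _ hT => muFn_nat_ge hT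

lemma finite_natDegree_le (Fq : Type) [Field Fq] [Fintype Fq] (N : ℕ) :
    {B : Polynomial Fq | B.natDegree ≤ N}.Finite := by
  have hinj : Set.InjOn (fun B : Polynomial Fq => fun i : Fin (N + 1) => B.coeff i)
      {B | B.natDegree ≤ N} := by
    intro B1 h1 B2 h2 h
    ext i
    rcases le_or_gt i N with hi | hi
    · have := congrFun h ⟨i, by omega⟩
      simpa using this
    · rw [Polynomial.coeff_eq_zero_of_natDegree_lt (lt_of_le_of_lt h1 hi),
        Polynomial.coeff_eq_zero_of_natDegree_lt (lt_of_le_of_lt h2 hi)]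
  exact Set.Finite.of_finite_image (Set.toFinite _) hinj

/-- The counting bounds in real form, for `T ≥ 6`. -/
lemma count_bounds_real {T : ℕ} (hT : 6 ≤ T) :
    1 / (2 * (muFn (T : ℝ) : ℝ)) ≤ ((Pset ∩ Set.Iio T).ncard : ℝ) / (T : ℝ) ∧
    ((Pset ∩ Set.Iio T).ncard : ℝ) / (T : ℝ) ≤ 3 / (muFn (T : ℝ) : ℝ) := by
  obtain ⟨hfl, hfu⟩ := muFn_nat_spec (by omega : 1 ≤ T)
  set K := muFn (T : ℝ) with hKdef
  have hK3 : 3 ≤ K := muFn_nat_ge (by simpa [Nat.factorial] using hT)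
  have hlb := count_lb hK3 hfl hfu
  have hub := count_ub (by omega) hfl hfu
  have hTpos : (0 : ℝ) < T := by exact_mod_cast (by omega : 0 < T)
  have hKpos : (0 : ℝ) < K := by exact_mod_cast (by omega : 0 < K)
  set cnt := (Pset ∩ Set.Iio T).ncard with hcnt
  constructor
  · rw [div_le_div_iff₀ (by positivity) hTpos, one_mul]
    calc (T : ℝ) ≤ ((2 * K * cnt : ℕ) : ℝ) := by exact_mod_cast hlb
      _ = (cnt : ℝ) * (2 * K) := by push_cast; ring
  · rw [div_le_div_iff₀ hTpos hKpos]
    calc (cnt : ℝ) * K = ((K * cnt : ℕ) : ℝ) := by push_cast; ring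
      _ ≤ ((3 * T : ℕ) : ℝ) := by exact_mod_cast hub
      _ = 3 * T := by push_cast; ring

/-- Existence of a sparse subset `S_*` of `S` with prescribed counting behaviour and
relative upper density zero.  Here `A n` denotes the `(n+1)`-st element `A_{n+1}` of
the degree-monotone enumeration of `S`. -/
theorem exists_sparse_subset (Fq : Type) [Field Fq] [Fintype Fq]
    (S : Set (Polynomial Fq)) (hS : S ⊆ poly1 Fq) (hSinf : S.Infinite)
    (A : ℕ → Polynomial Fq) (hAinj : Function.Injective A) (hArange : Set.range A = S)
    (hAmono : Monotone fun n : ℕ => (A n).natDegree) :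
    ∃ Sstar ⊆ S,
      (∀ᶠ T : ℕ in Filter.atTop,
        1 / (2 * (muFn T : ℝ)) ≤ ({n : ℕ | n < T ∧ A n ∈ Sstar}.ncard : ℝ) / (T : ℝ) ∧
        ({n : ℕ | n < T ∧ A n ∈ Sstar}.ncard : ℝ) / (T : ℝ) ≤ 3 / (muFn T : ℝ)) ∧
      relDensQ Fq Sstar S = 0 := by
  classical
  refine ⟨A '' Pset, hArange ▸ Set.image_subset_range A Pset, ?_, ?_⟩
  · -- counting bounds
    filter_upwards [Filter.eventually_ge_atTop 6] with T hT
    have hseteq : {n : ℕ | n < T ∧ A n ∈ A '' Pset} = Pset ∩ Set.Iio T := by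
      ext n
      simp only [Set.mem_setOf_eq, hAinj.mem_set_image, Set.mem_inter_iff, Set.mem_Iio]
      tauto
    rw [hseteq]
    exact count_bounds_real hT
  · -- relative upper density zero
    set c : ℕ → ℕ := fun N => sInf {n | N < (A n).natDegree} with hcdef
    have hne : ∀ N : ℕ, {n | N < (A n).natDegree}.Nonempty := by
      intro N
      by_contra h
      rw [Set.not_nonempty_iff_eq_empty] at h
      have hsub : S ⊆ {B : Polynomial Fq | B.natDegree ≤ N} := by
        rw [← hArange]
        rintro _ ⟨n, rfl⟩
        have hn : n ∉ ({n | N < (A n).natDegree} : Set ℕ) := by rw [h]; exact Set.notMem_empty n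
        simp only [Set.mem_setOf_eq, not_lt] at hn
        exact hn
      exact hSinf ((finite_natDegree_le Fq N).subset hsub)
    have hciff : ∀ N n : ℕ, n < c N ↔ (A n).natDegree ≤ N := by
      intro N n
      constructor
      · intro h
        have := Nat.notMem_of_lt_sInf h
        simp only [Set.mem_setOf_eq, not_lt] at this
        exact this
      · intro h
        by_contra hlt
        push_neg at hlt
        have hmem : N < (A (c N)).natDegree := Nat.sInf_mem (hne N)
        have : (A (c N)).natDegree ≤ (A n).natDegree := hAmono hlt
        omega
    have hQNS : ∀ N, (QN Fq N S).ncard = c N := by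
      intro N
      have heq : QN Fq N S = A '' Set.Iio (c N) := by
        ext B
        simp only [QN, Set.mem_setOf_eq, Set.mem_image, Set.mem_Iio, ← hArange,
          Set.mem_range]
        constructor
        · rintro ⟨⟨n, rfl⟩, hdeg⟩; exact ⟨n, (hciff N n).mpr hdeg, rfl⟩
        · rintro ⟨n, hn, rfl⟩; exact ⟨⟨n, rfl⟩, (hciff N n).mp hn⟩
      rw [heq, Set.ncard_image_of_injective _ hAinj, ← Finset.coe_range,
        Set.ncard_coe_finset, Finset.card_range]
    have hQNstar : ∀ N, (QN Fq N (A '' Pset)).ncard = (Pset ∩ Set.Iio (c N)).ncard := by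
      intro N
      have heq : QN Fq N (A '' Pset) = A '' (Pset ∩ Set.Iio (c N)) := by
        ext B
        simp only [QN, Set.mem_setOf_eq, Set.mem_image, Set.mem_inter_iff, Set.mem_Iio]
        constructor
        · rintro ⟨⟨n, hnP, rfl⟩, hdeg⟩; exact ⟨n, ⟨hnP, (hciff N n).mpr hdeg⟩, rfl⟩
        · rintro ⟨n, ⟨hnP, hn⟩, rfl⟩; exact ⟨⟨n, hnP, rfl⟩, (hciff N n).mp hn⟩
      rw [heq, Set.ncard_image_of_injective _ hAinj]
    set g : ℕ → ℝ := fun T => ((Pset ∩ Set.Iio T).ncard : ℝ) / (T : ℝ) with hgdef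
    have hmu_tend : Filter.Tendsto (fun T : ℕ => ((muFn (T : ℝ)) : ℝ))
        Filter.atTop Filter.atTop := tendsto_natCast_atTop_atTop.comp muFn_tendsto
    have h3 : Filter.Tendsto (fun T : ℕ => 3 / ((muFn (T : ℝ)) : ℝ))
        Filter.atTop (nhds 0) := tendsto_const_nhds.div_atTop hmu_tend
    have hgto : Filter.Tendsto g Filter.atTop (nhds 0) := by
      refine squeeze_zero' (Filter.Eventually.of_forall fun T => by positivity) ?_ h3
      filter_upwards [Filter.eventually_ge_atTop 6] with T hT
      exact (count_bounds_real hT).2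
    have hc_tend : Filter.Tendsto c Filter.atTop Filter.atTop := by
      rw [Filter.tendsto_atTop]
      intro b
      filter_upwards [Filter.eventually_ge_atTop ((A b).natDegree)] with N hN
      exact le_of_lt ((hciff N b).mpr hN)
    have hfun : (fun N : ℕ => ((QN Fq N (A '' Pset)).ncard : ℝ) / ((QN Fq N S).ncard : ℝ))
        = g ∘ c := by
      funext N
      simp only [Function.comp_apply, hgdef, hQNS, hQNstar]
    unfold relDensQ
    rw [hfun]
    exact (hgto.comp hc_tend).limsup_eq

end LaurentCF
end
end

section
/- Let S ⊂ 𝔽_q^1[X] have growth density with exponent α ≥ 1, enumerated without repetition as S = {A_n : n ∈ ℕ} with deg A_1 ≤ deg A_2 ≤ ⋯, and let S_* ⊂ S satisfy 1/(2μ(T)) ≤ #{1 ≤ n ≤ T : A_n ∈ S_*}/T ≤ 3/μ(T) for all sufficiently large T. Then there exist a natural number t ≥ 3 and constants c₀ > 0 and ρ > 0 such that for all integers n ≥ 1, #𝒞_n ≥ c₀ q^{(2n+1)^t/α} / n^ρ, where 𝒞_n = {A ∈ S_* : (2n)^t ≤ deg A < (2n+1)^t}. -/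
open scoped ENNReal
open Filter
open scoped Classical

noncomputable section

namespace LaurentCF

/-! We model the field `𝔽_q((X⁻¹))` of formal Laurent series in `X⁻¹` by
`LaurentSeries Fq = HahnSeries ℤ Fq`, where the Hahn-series variable plays the
role of `X⁻¹`: the coefficient at `i : ℤ` is the coefficient `c_i` of `X^{-i}`. -/

variable (Fq : Type) [Field Fq] [Fintype Fq]

variable {Fq}

variable (Fq)

/-! Since `A` lists `S` by nondecreasing degree, its first `#Q_N(S)` terms are exactly `Q_N(S)`.
The counting hypothesis at `T = #Q_N(S) ≍ q^{N/α} / N^β`, together with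
`μ(T) ≤ log₂ T + 1 = O(N)`, then gives `#Q_N(S_*) ≥ c q^{N/α} / N^{β+1}`, while trivially
`#Q_N(S_*) ≤ γ₂ q^{N/α}`. The window count is `#Q_{M-1}(S_*) - #Q_{L-1}(S_*)` for `L = (2n)^t`,
`M = (2n+1)^t`. As `M - L ≥ (2n)^{t-1}`, for `t` large the gain `q^{(M-L)/α}` beats the
polynomial loss `M^{β+1} ≤ (3n)^{t(β+1)}` uniformly in `n ≥ 1`. -/

section Counting

variable {F : Type} [Field F]

theorem QN_subset_QN {U S : Set (Polynomial F)} (h : U ⊆ S) (N : ℕ) : QN F N U ⊆ QN F N S :=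
  fun _ hB => ⟨h hB.1, hB.2⟩

theorem QN_subset_QN_of_le {N N' : ℕ} (h : N ≤ N') (S : Set (Polynomial F)) :
    QN F N S ⊆ QN F N' S :=
  fun _ hB => ⟨hB.1, hB.2.trans h⟩

theorem QN_sdiff_QN (N N' : ℕ) (S : Set (Polynomial F)) :
    QN F N' S \ QN F N S = {B ∈ S | N < B.natDegree ∧ B.natDegree ≤ N'} := by
  ext B
  simp only [QN, Set.mem_sdiff, Set.mem_ofPred_eq, not_and, not_le]
  tauto

variable [Fintype F]

open Polynomial in
theorem finite_setOf_natDegree_le (N : ℕ) : {p : F[X] | p.natDegree ≤ N}.Finite := by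
  have : Finite (degreeLT F (N + 1)) := .of_equiv _ (degreeLTEquiv F (N + 1)).toEquiv.symm
  refine (Set.toFinite (degreeLT F (N + 1) : Set F[X])).subset fun p hp => ?_
  rw [SetLike.mem_coe, mem_degreeLT]
  exact degree_le_natDegree.trans_lt (by exact_mod_cast Nat.lt_succ_of_le hp)

theorem QN_finite (N : ℕ) (S : Set (Polynomial F)) : (QN F N S).Finite :=
  (finite_setOf_natDegree_le N).subset fun _ h => h.2

theorem ncard_QN_sdiff_QN {N N' : ℕ} (h : N ≤ N') (S : Set (Polynomial F)) :
    ((QN F N' S \ QN F N S).ncard : ℝ) = (QN F N' S).ncard - (QN F N S).ncard := by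
  rw [eq_sub_iff_add_eq]
  exact_mod_cast Set.ncard_sdiff_add_ncard_of_subset (QN_subset_QN_of_le h S) (QN_finite N' S)

variable {S : Set (Polynomial F)} {A : ℕ → Polynomial F}

theorem setOf_natDegree_le_eq_Iio (hAinj : Function.Injective A) (hArange : Set.range A = S)
    (hAmono : Monotone fun n => (A n).natDegree) (N : ℕ) :
    {n | (A n).natDegree ≤ N} = Set.Iio (QN F N S).ncard := by
  have hpre : {n | (A n).natDegree ≤ N} = A ⁻¹' QN F N S := by
    ext n
    simp only [QN, ← hArange, Set.mem_ofPred_eq, Set.mem_preimage, Set.mem_range_self, true_and]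
  have hfin : {n | (A n).natDegree ≤ N}.Finite :=
    hpre ▸ (QN_finite N S).preimage hAinj.injOn
  have hlower : IsLowerSet {n | (A n).natDegree ≤ N} := fun _ _ hab hb => (hAmono hab).trans hb
  obtain ⟨a, ha⟩ := hlower.eq_univ_or_Iio.resolve_left fun h => Set.infinite_univ (h ▸ hfin)
  have hcard : {n | (A n).natDegree ≤ N}.ncard = (QN F N S).ncard := by
    rw [hpre, Set.ncard_preimage_of_injective_subset_range hAinj (hArange ▸ fun _ hB => hB.1)]
  rw [ha] at hcard ⊢
  rw [← hcard, Set.ncard_Iio_nat]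

theorem ncard_setOf_lt_ncard_QN (hAinj : Function.Injective A) (hArange : Set.range A = S)
    (hAmono : Monotone fun n => (A n).natDegree) {Sstar : Set (Polynomial F)}
    (hSstar : Sstar ⊆ S) (N : ℕ) :
    {n | n < (QN F N S).ncard ∧ A n ∈ Sstar}.ncard = (QN F N Sstar).ncard := by
  have h : {n | n < (QN F N S).ncard ∧ A n ∈ Sstar} = A ⁻¹' QN F N Sstar := by
    ext n
    change n ∈ Set.Iio _ ∧ _ ↔ _
    rw [← setOf_natDegree_le_eq_Iio hAinj hArange hAmono]
    simp only [QN, Set.mem_ofPred_eq, Set.mem_preimage]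
    tauto
  rw [h, Set.ncard_preimage_of_injective_subset_range hAinj
    (hArange ▸ fun _ hB => hSstar hB.1)]

theorem tendsto_ncard_QN (hAinj : Function.Injective A) (hArange : Set.range A = S)
    (hAmono : Monotone fun n => (A n).natDegree) :
    Tendsto (fun N => (QN F N S).ncard) atTop atTop := by
  refine tendsto_atTop_atTop.2 fun b => ⟨(A b).natDegree, fun N hN => ?_⟩
  have hb : b ∈ {n | (A n).natDegree ≤ N} := hN
  rw [setOf_natDegree_le_eq_Iio hAinj hArange hAmono] at hb
  exact le_of_lt hb

end Counting

section Mu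

theorem bddAbove_setOf_factorial_le (x : ℝ) : BddAbove {k : ℕ | (k.factorial : ℝ) ≤ x} := by
  obtain ⟨m, hm⟩ := exists_nat_ge x
  refine ⟨m, fun k hk => ?_⟩
  have : k.factorial ≤ m := by exact_mod_cast (show (k.factorial : ℝ) ≤ x from hk).trans hm
  exact (Nat.self_le_factorial k).trans this

theorem factorial_muFn_le {x : ℝ} (hx : 1 ≤ x) : ((muFn x).factorial : ℝ) ≤ x :=
  Nat.sSup_mem ⟨1, by simpa using hx⟩ (bddAbove_setOf_factorial_le x)

theorem one_le_muFn {x : ℝ} (hx : 1 ≤ x) : 1 ≤ muFn x :=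
  le_csSup (bddAbove_setOf_factorial_le x) (by simpa using hx)

theorem muFn_le_logb_add_one {x : ℝ} (hx : 1 ≤ x) : (muFn x : ℝ) ≤ Real.logb 2 x + 1 := by
  have hμ := one_le_muFn hx
  have hfact : 2 ^ (muFn x - 1) ≤ (muFn x).factorial := by
    simpa [Nat.add_sub_cancel' hμ] using @Nat.factorial_mul_pow_le_factorial 1 (muFn x - 1)
  have hpow : ((2 : ℕ) ^ (muFn x - 1) : ℝ) ≤ x :=
    le_trans (by exact_mod_cast hfact) (factorial_muFn_le hx)
  have : ((muFn x - 1 : ℕ) : ℝ) ≤ Real.logb 2 x := by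
    rw [Real.le_logb_iff_rpow_le one_lt_two (by linarith), Real.rpow_natCast]
    exact_mod_cast hpow
  push_cast [hμ] at this
  linarith

theorem muFn_le_mul_of_le_mul_rpow {x γ q α y : ℝ} (hx : 1 ≤ x) (hγ : 0 < γ) (hq : 0 < q)
    (hy : 1 ≤ y) (h : x ≤ γ * q ^ (y / α)) :
    (muFn x : ℝ) ≤ (|Real.logb 2 γ| + |Real.logb 2 q / α| + 1) * y := by
  have hlog : Real.logb 2 x ≤ Real.logb 2 γ + y * (Real.logb 2 q / α) := by
    calc Real.logb 2 x ≤ Real.logb 2 (γ * q ^ (y / α)) :=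
          Real.logb_le_logb_of_le one_lt_two (by linarith) h
      _ = Real.logb 2 γ + y * (Real.logb 2 q / α) := by
          rw [Real.logb_mul hγ.ne' (Real.rpow_pos_of_pos hq _).ne', Real.logb_rpow_eq_mul_logb_of_pos hq]
          ring
  have h1 : Real.logb 2 γ ≤ |Real.logb 2 γ| * y :=
    (le_abs_self _).trans (le_mul_of_one_le_right (abs_nonneg _) hy)
  have h2 : y * (Real.logb 2 q / α) ≤ |Real.logb 2 q / α| * y := by
    rw [mul_comm]; exact mul_le_mul_of_nonneg_right (le_abs_self _) (by linarith)
  nlinarith [muFn_le_logb_add_one hx]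

end Mu

section Growth

variable {F : Type} [Field F] [Fintype F] {S Sstar : Set (Polynomial F)} {A : ℕ → Polynomial F}

theorem exists_eventually_le_ncard_QN (hAinj : Function.Injective A) (hArange : Set.range A = S)
    (hAmono : Monotone fun n => (A n).natDegree) (hSstar : Sstar ⊆ S)
    (hcount : ∀ᶠ T : ℕ in atTop,
      1 / (2 * (muFn T : ℝ)) ≤ ({n : ℕ | n < T ∧ A n ∈ Sstar}.ncard : ℝ) / (T : ℝ))
    {α γ₁ γ₂ β : ℝ} (hγ₁ : 0 < γ₁) (hγ₂ : 0 < γ₂) (hβ : 0 ≤ β)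
    (hgd : ∀ᶠ N : ℕ in atTop,
      γ₁ * (Fintype.card F : ℝ) ^ ((N : ℝ) / α) / (N : ℝ) ^ β ≤ ((QN F N S).ncard : ℝ) ∧
      ((QN F N S).ncard : ℝ) ≤ γ₂ * (Fintype.card F : ℝ) ^ ((N : ℝ) / α) / (N : ℝ) ^ β) :
    ∃ c > 0, ∀ᶠ N : ℕ in atTop,
      c * (Fintype.card F : ℝ) ^ ((N : ℝ) / α) / (N : ℝ) ^ (β + 1) ≤ ((QN F N Sstar).ncard : ℝ) := by
  set q : ℝ := (Fintype.card F : ℝ)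
  have hq : 0 < q := by positivity
  set C := |Real.logb 2 γ₂| + |Real.logb 2 q / α| + 1
  have hC : 0 < C := by positivity
  have hT := tendsto_ncard_QN hAinj hArange hAmono
  refine ⟨γ₁ / (2 * C), by positivity, ?_⟩
  filter_upwards [hgd, hT.eventually hcount, hT.eventually_ge_atTop 1, eventually_ge_atTop 1]
    with N ⟨hlow, hup⟩ hcnt hT1 hN1
  rw [ncard_setOf_lt_ncard_QN hAinj hArange hAmono hSstar] at hcnt
  set T := (QN F N S).ncard
  have hN : (1 : ℝ) ≤ N := by exact_mod_cast hN1
  have hT1' : (1 : ℝ) ≤ T := by exact_mod_cast hT1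
  have hNβ : 1 ≤ (N : ℝ) ^ β := Real.one_le_rpow hN hβ
  have hμ : (muFn T : ℝ) ≤ C * N :=
    muFn_le_mul_of_le_mul_rpow hT1' hγ₂ hq hN (hup.trans (div_le_self (by positivity) hNβ))
  have hμpos : (0 : ℝ) < muFn T := by exact_mod_cast one_le_muFn hT1'
  calc γ₁ / (2 * C) * q ^ ((N : ℝ) / α) / (N : ℝ) ^ (β + 1)
      = γ₁ * q ^ ((N : ℝ) / α) / (N : ℝ) ^ β / (2 * (C * N)) := by
        rw [Real.rpow_add_one (by positivity)]
        field_simp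
    _ ≤ T / (2 * muFn T) := by gcongr
    _ = T * (1 / (2 * muFn T)) := by ring
    _ ≤ T * ((QN F N Sstar).ncard / T) := by gcongr
    _ = (QN F N Sstar).ncard := by field_simp

end Growth

section Asymptotics

open Topology

theorem eventually_add_mul_le_mul_two_pow (a b : ℝ) {s : ℝ} (hs : 0 < s) :
    ∀ᶠ t : ℕ in atTop, a + b * t ≤ s * 2 ^ t := by
  have h : Tendsto (fun t : ℕ => a * ((t : ℝ) ^ 0 / 2 ^ t) + b * ((t : ℝ) ^ 1 / 2 ^ t))
      atTop (𝓝 (a * 0 + b * 0)) :=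
    ((tendsto_pow_const_div_const_pow_of_one_lt 0 one_lt_two).const_mul a).add
      ((tendsto_pow_const_div_const_pow_of_one_lt 1 one_lt_two).const_mul b)
  filter_upwards [h.eventually (gt_mem_nhds (by simpa using hs))] with t ht
  rw [show a * ((t : ℝ) ^ 0 / 2 ^ t) + b * ((t : ℝ) ^ 1 / 2 ^ t) = (a + b * t) / 2 ^ t by ring,
    div_lt_iff₀ (by positivity)] at ht
  exact ht.le

theorem eventually_mul_rpow_le_rpow_pow {K q α k : ℝ} (hK : 0 < K) (hq : 1 < q) (hα : 0 < α)
    (hk : 0 ≤ k) :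
    ∀ᶠ t : ℕ in atTop, ∀ n : ℕ, 1 ≤ n →
      K * (3 * n : ℝ) ^ (((t : ℝ) + 1) * k) ≤ q ^ ((2 * n : ℝ) ^ t / α) := by
  have hs : 0 < Real.log q / α := div_pos (Real.log_pos hq) hα
  filter_upwards [eventually_add_mul_le_mul_two_pow (|Real.log K| + 3 * k) (3 * k) hs,
    eventually_ne_atTop 0] with t ht ht0 n hn
  have hn' : (1 : ℝ) ≤ n := by exact_mod_cast hn
  rw [← Real.log_le_log_iff (by positivity) (by positivity), Real.log_mul hK.ne' (by positivity),
    Real.log_rpow (by positivity), Real.log_rpow (by positivity)]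
  have hnt : (n : ℝ) ≤ (n : ℝ) ^ t := le_self_pow₀ hn' ht0
  have hlog3n : Real.log (3 * n) ≤ 3 * (n : ℝ) ^ t :=
    (Real.log_le_self (by positivity)).trans (by linarith)
  have hlogK : Real.log K ≤ |Real.log K| * (n : ℝ) ^ t :=
    (le_abs_self _).trans (le_mul_of_one_le_right (abs_nonneg _) (one_le_pow₀ hn'))
  calc Real.log K + ((t : ℝ) + 1) * k * Real.log (3 * n)
      ≤ |Real.log K| * (n : ℝ) ^ t + ((t : ℝ) + 1) * k * (3 * (n : ℝ) ^ t) := by gcongr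
    _ = (|Real.log K| + 3 * k + 3 * k * t) * (n : ℝ) ^ t := by ring
    _ ≤ (Real.log q / α * 2 ^ t) * (n : ℝ) ^ t := by gcongr
    _ = (2 * n : ℝ) ^ t / α * Real.log q := by rw [mul_pow]; ring

end Asymptotics

section Window

theorem pow_succ_add_pow_le_add_one_pow_succ (m u : ℕ) : m ^ (u + 1) + m ^ u ≤ (m + 1) ^ (u + 1) :=
  calc m ^ (u + 1) + m ^ u = m ^ u * (m + 1) := by ring
    _ ≤ (m + 1) ^ u * (m + 1) := Nat.mul_le_mul_right _ (Nat.pow_le_pow_left (by omega) u)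
    _ = (m + 1) ^ (u + 1) := (pow_succ _ _).symm

theorem div_mul_rpow_div_le_rpow_pred_div {q α c β : ℝ} (hq : 1 < q) (hc : 0 ≤ c) (hβ : 0 ≤ β)
    {n : ℕ} (hn : 1 ≤ n) (u : ℕ) :
    c / (q ^ (1 / α) * 3 ^ (((u : ℝ) + 1) * (β + 1))) *
        (q ^ ((((2 * n + 1) ^ (u + 1) : ℕ) : ℝ) / α) / (n : ℝ) ^ (((u : ℝ) + 1) * (β + 1)))
      ≤ c * q ^ ((((2 * n + 1) ^ (u + 1) - 1 : ℕ) : ℝ) / α)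
          / (((2 * n + 1) ^ (u + 1) - 1 : ℕ) : ℝ) ^ (β + 1) := by
  set M := (2 * n + 1) ^ (u + 1)
  set ρ := ((u : ℝ) + 1) * (β + 1)
  have hn' : (1 : ℝ) ≤ n := by exact_mod_cast hn
  have hM2 : (2 : ℝ) ≤ M := by
    have := Nat.le_self_pow (by omega : u + 1 ≠ 0) (2 * n + 1)
    exact_mod_cast (show 2 ≤ M by omega)
  have hM3n : (M : ℝ) ^ (β + 1) ≤ (3 * n : ℝ) ^ ρ := by
    rw [show ρ = ((u + 1 : ℕ) : ℝ) * (β + 1) by push_cast; rfl, Real.rpow_mul (by positivity),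
      Real.rpow_natCast]
    gcongr
    simp only [M]
    push_cast
    gcongr
    linarith
  rw [Nat.cast_pred (pow_pos (by omega) _), show ((M : ℝ) - 1) / α = M / α - 1 / α by ring,
    Real.rpow_sub (by linarith)]
  calc c / (q ^ (1 / α) * 3 ^ ρ) * (q ^ ((M : ℝ) / α) / (n : ℝ) ^ ρ)
      = c * (q ^ ((M : ℝ) / α) / q ^ (1 / α)) / (3 * n : ℝ) ^ ρ := by
        rw [Real.mul_rpow (by norm_num) (by linarith)]
        field_simp
    _ ≤ _ := by
        gcongr
        · exact Real.rpow_pos_of_pos (by linarith) _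
        · exact (Real.rpow_le_rpow (by linarith) (by linarith) (by linarith)).trans hM3n

theorem rpow_pred_le_div_mul_rpow_div {q α c C β : ℝ} (hq : 1 < q) (hα : 0 < α) (hc : 0 < c)
    (hC : 0 ≤ C) {n : ℕ} (hn : 1 ≤ n) {u : ℕ}
    (hkey : 2 * C * q ^ (1 / α) / c * (3 * n : ℝ) ^ (((u : ℝ) + 1) * (β + 1))
      ≤ q ^ ((2 * n : ℝ) ^ u / α)) :
    C * q ^ ((((2 * n) ^ (u + 1) - 1 : ℕ) : ℝ) / α)
      ≤ c / (2 * q ^ (1 / α) * 3 ^ (((u : ℝ) + 1) * (β + 1))) *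
        (q ^ ((((2 * n + 1) ^ (u + 1) : ℕ) : ℝ) / α) / (n : ℝ) ^ (((u : ℝ) + 1) * (β + 1))) := by
  set M := (2 * n + 1) ^ (u + 1)
  set L := (2 * n) ^ (u + 1)
  set ρ := ((u : ℝ) + 1) * (β + 1)
  set c₀ := c / (2 * q ^ (1 / α) * 3 ^ ρ)
  set K := 2 * C * q ^ (1 / α) / c
  have hq0 : 0 < q := by linarith
  have hn' : (0 : ℝ) < n := by exact_mod_cast hn
  have hgap : (2 * n : ℝ) ^ u ≤ (M : ℝ) - L := by
    have : ((L + (2 * n) ^ u : ℕ) : ℝ) ≤ M := by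
      exact_mod_cast pow_succ_add_pow_le_add_one_pow_succ (2 * n) u
    push_cast at this
    linarith
  have hkey' := hkey.trans (Real.rpow_le_rpow_of_exponent_le hq.le
    (div_le_div_of_nonneg_right hgap hα.le))
  have hc₀K : c₀ * K * 3 ^ ρ = C := by
    simp only [c₀, K]
    field_simp
  calc C * q ^ ((((L - 1 : ℕ) : ℝ)) / α) ≤ C * q ^ ((L : ℝ) / α) := by
        rw [Nat.cast_pred (pow_pos (by omega) _)]
        gcongr
        · exact hq.le
        · linarith
    _ = c₀ * (K * (3 * n : ℝ) ^ ρ) / (n : ℝ) ^ ρ * q ^ ((L : ℝ) / α) := by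
        rw [Real.mul_rpow (by norm_num) hn'.le, ← hc₀K]
        field_simp
    _ ≤ c₀ * q ^ (((M : ℝ) - L) / α) / (n : ℝ) ^ ρ * q ^ ((L : ℝ) / α) := by gcongr
    _ = c₀ * (q ^ ((M : ℝ) / α) / (n : ℝ) ^ ρ) := by
        rw [div_mul_eq_mul_div, mul_assoc, ← Real.rpow_add hq0, sub_div, sub_add_cancel]
        ring

theorem exists_pow_window_lower_bound {q α c C β : ℝ} (hq : 1 < q) (hα : 0 < α) (hc : 0 < c)
    (hC : 0 < C) (hβ : 0 ≤ β) {f : ℕ → ℝ}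
    (hlow : ∀ᶠ N : ℕ in atTop, c * q ^ ((N : ℝ) / α) / (N : ℝ) ^ (β + 1) ≤ f N)
    (hup : ∀ᶠ N : ℕ in atTop, f N ≤ C * q ^ ((N : ℝ) / α)) :
    ∃ t : ℕ, 3 ≤ t ∧ ∃ c₀ > (0 : ℝ), ∃ ρ > (0 : ℝ), ∀ n : ℕ, 1 ≤ n →
      c₀ * q ^ ((((2 * n + 1) ^ t : ℕ) : ℝ) / α) / (n : ℝ) ^ ρ
        ≤ f ((2 * n + 1) ^ t - 1) - f ((2 * n) ^ t - 1) := by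
  have hq0 : 0 < q := by linarith
  obtain ⟨N₀, hN₀⟩ := eventually_atTop.1 (hlow.and hup)
  obtain ⟨u, hu, huN₀⟩ := ((eventually_mul_rpow_le_rpow_pow
    (by positivity : 0 < 2 * C * q ^ (1 / α) / c) hq hα (by linarith : 0 ≤ β + 1)).and
    (eventually_ge_atTop (N₀ + 2))).exists
  refine ⟨u + 1, by omega, c / (2 * q ^ (1 / α) * 3 ^ (((u : ℝ) + 1) * (β + 1))), by positivity,
    ((u : ℝ) + 1) * (β + 1), by positivity, fun n hn => ?_⟩
  have hLN₀ : N₀ + 1 ≤ (2 * n) ^ (u + 1) := by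
    have h2u : u + 1 < 2 ^ (u + 1) := Nat.lt_two_pow_self
    have h2L : 2 ^ (u + 1) ≤ (2 * n) ^ (u + 1) := Nat.pow_le_pow_left (by omega) _
    omega
  have hLM : (2 * n) ^ (u + 1) ≤ (2 * n + 1) ^ (u + 1) := Nat.pow_le_pow_left (by omega) _
  have hfM := (hN₀ ((2 * n + 1) ^ (u + 1) - 1) (by omega)).1
  have hfL := (hN₀ ((2 * n) ^ (u + 1) - 1) (by omega)).2
  have hlowM := div_mul_rpow_div_le_rpow_pred_div (α := α) hq hc.le hβ hn u
  have hupL := rpow_pred_le_div_mul_rpow_div hq hα hc hC.le hn (hu n hn)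
  rw [show c / (q ^ (1 / α) * 3 ^ (((u : ℝ) + 1) * (β + 1)))
      = 2 * (c / (2 * q ^ (1 / α) * 3 ^ (((u : ℝ) + 1) * (β + 1)))) by field_simp] at hlowM
  rw [mul_div_assoc]
  linarith

end Window

theorem card_window_lower_bound_general (Fq : Type) [Field Fq] [Fintype Fq]
    (S : Set (Polynomial Fq))
    (α : ℝ) (hα : 1 ≤ α) (hSgd : HasGrowthDensity Fq S α)
    (A : ℕ → Polynomial Fq) (hAinj : Function.Injective A) (hArange : Set.range A = S)
    (hAmono : Monotone fun n : ℕ => (A n).natDegree)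
    (Sstar : Set (Polynomial Fq)) (hSstar : Sstar ⊆ S)
    (hcount : ∀ᶠ T : ℕ in Filter.atTop,
      1 / (2 * (muFn T : ℝ)) ≤ ({n : ℕ | n < T ∧ A n ∈ Sstar}.ncard : ℝ) / (T : ℝ) ∧
      ({n : ℕ | n < T ∧ A n ∈ Sstar}.ncard : ℝ) / (T : ℝ) ≤ 3 / (muFn T : ℝ)) :
    ∃ t : ℕ, 3 ≤ t ∧ ∃ c₀ > (0 : ℝ), ∃ ρ > (0 : ℝ), ∀ n : ℕ, 1 ≤ n →
      c₀ * (Fintype.card Fq : ℝ) ^ ((((2 * n + 1) ^ t : ℕ) : ℝ) / α) / (n : ℝ) ^ ρ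
        ≤ (({B ∈ Sstar | (2 * n) ^ t ≤ B.natDegree ∧ B.natDegree < (2 * n + 1) ^ t}).ncard : ℝ) := by
  obtain ⟨γ₁, hγ₁, γ₂, hγ₂, β, hβ, hgd⟩ := hSgd
  obtain ⟨c, hc, hlow⟩ := exists_eventually_le_ncard_QN hAinj hArange hAmono hSstar
    (hcount.mono fun _ h => h.1) hγ₁ hγ₂ hβ hgd
  have hup : ∀ᶠ N : ℕ in atTop,
      ((QN Fq N Sstar).ncard : ℝ) ≤ γ₂ * (Fintype.card Fq : ℝ) ^ ((N : ℝ) / α) := by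
    filter_upwards [hgd, eventually_ge_atTop 1] with N hN hN1
    calc ((QN Fq N Sstar).ncard : ℝ) ≤ (QN Fq N S).ncard := by
          exact_mod_cast Set.ncard_le_ncard (QN_subset_QN hSstar N) (QN_finite N S)
      _ ≤ _ := hN.2.trans (div_le_self (by positivity) (Real.one_le_rpow (by exact_mod_cast hN1) hβ))
  obtain ⟨t, ht, c₀, hc₀, ρ, hρ, hwindow⟩ :=
    exists_pow_window_lower_bound one_lt_cardR (by linarith) hc hγ₂ hβ hlow hup
  refine ⟨t, ht, c₀, hc₀, ρ, hρ, fun n hn => (hwindow n hn).trans_eq ?_⟩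
  have hLM : (2 * n) ^ t ≤ (2 * n + 1) ^ t := Nat.pow_le_pow_left (by omega) t
  have hL : 1 ≤ (2 * n) ^ t := Nat.one_le_pow _ _ (by omega)
  rw [← ncard_QN_sdiff_QN (Nat.sub_le_sub_right hLM 1), QN_sdiff_QN]
  congr 3
  ext B
  exact and_congr_right fun _ => by omega

/-- Lower bound on the cardinality of the degree windows
`𝒞_n = {A ∈ S_* : (2n)^t ≤ deg A < (2n+1)^t}`. -/
theorem card_window_lower_bound (Fq : Type) [Field Fq] [Fintype Fq]
    (S : Set (Polynomial Fq)) (hS : S ⊆ poly1 Fq)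
    (α : ℝ) (hα : 1 ≤ α) (hSgd : HasGrowthDensity Fq S α)
    (A : ℕ → Polynomial Fq) (hAinj : Function.Injective A) (hArange : Set.range A = S)
    (hAmono : Monotone fun n : ℕ => (A n).natDegree)
    (Sstar : Set (Polynomial Fq)) (hSstar : Sstar ⊆ S)
    (hcount : ∀ᶠ T : ℕ in Filter.atTop,
      1 / (2 * (muFn T : ℝ)) ≤ ({n : ℕ | n < T ∧ A n ∈ Sstar}.ncard : ℝ) / (T : ℝ) ∧
      ({n : ℕ | n < T ∧ A n ∈ Sstar}.ncard : ℝ) / (T : ℝ) ≤ 3 / (muFn T : ℝ)) :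
    ∃ t : ℕ, 3 ≤ t ∧ ∃ c₀ > (0 : ℝ), ∃ ρ > (0 : ℝ), ∀ n : ℕ, 1 ≤ n →
      c₀ * (Fintype.card Fq : ℝ) ^ ((((2 * n + 1) ^ t : ℕ) : ℝ) / α) / (n : ℝ) ^ ρ
        ≤ (({B ∈ Sstar | (2 * n) ^ t ≤ B.natDegree ∧ B.natDegree < (2 * n + 1) ^ t}).ncard : ℝ) :=
  card_window_lower_bound_general Fq S α hα hSgd A hAinj hArange hAmono Sstar hSstar hcount

end LaurentCF
end
end
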